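/- arXiv:2001.03423 — 3 statements merged into one kernel-verified Lean document; each statement's English description precedes it below -/
import Mathlib

section
/- Solution of the Bellman equation for the (d,∞)-runlength-limited input-constrained BSC (core of Theorem 6): Fix an integer d ≥ 1 and p ∈ [0,1], and define ρ_p := max_{a ∈ [0,1]} ( h_b(a·p + (1−a)·(1−p)) − h_b(p) ) / (a·d + 1). Then there exists a function h : {0, 1, …, d} → ℝ such that (i) ρ_p + h(i) = h(i+1) for all 0 ≤ i ≤ d−1, and (ii) ρ_p + h(d) = max_{a ∈ [0,1]} [ h_b(a·p + (1−a)·(1−p)) − h_b(p) + (1−a)·h(d) + a·h(0) ]. In particular, max_{a ∈ [0,1]} [ h_b(a·p + (1−a)·(1−p)) − h_b(p) − (a·d + 1)·ρ_p ] = 0. -/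
open Finset

/-- The binary entropy function (base 2); the convention `0 · log₂ 0 = 0` is
automatic since `Real.logb 2 0 = 0`. -/
noncomputable def binEnt (x : ℝ) : ℝ :=
  -(x * Real.logb 2 x) - (1 - x) * Real.logb 2 (1 - x)

/-- Dinkelbach's reduction of a fractional maximization to a parametric one. -/
theorem isGreatest_image_sub_mul_of_isGreatest_image_div {α : Type*} {S : Set α} {f g : α → ℝ}
    {ρ : ℝ} (hg : ∀ a ∈ S, 0 < g a) (hρ : IsGreatest ((fun a => f a / g a) '' S) ρ) :
    IsGreatest ((fun a => f a - g a * ρ) '' S) 0 := by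
  obtain ⟨⟨a₀, ha₀, hfa₀⟩, hub⟩ := hρ
  refine ⟨⟨a₀, ha₀, ?_⟩, ?_⟩
  · simp only [← hfa₀, mul_div_cancel₀ _ (hg a₀ ha₀).ne', sub_self]
  · rintro _ ⟨a, ha, rfl⟩
    have hle : f a / g a ≤ ρ := hub ⟨a, ha, rfl⟩
    rw [div_le_iff₀ (hg a ha)] at hle
    simp only
    linarith

theorem IsGreatest.image_add_const {α : Type*} {S : Set α} {f : α → ℝ} {m : ℝ}
    (hm : IsGreatest (f '' S) m) (c : ℝ) :
    IsGreatest ((fun a => f a + c) '' S) (m + c) := by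
  simpa only [Set.image_image, id] using (monotone_id.add_const c).map_isGreatest hm

theorem bellman_dinfty_BSC_general (d : ℕ) (p : ℝ)
    (ρ : ℝ)
    (hρ : IsGreatest
      ((fun a : ℝ => (binEnt (a * p + (1 - a) * (1 - p)) - binEnt p) / (a * d + 1)) ''
        Set.Icc (0 : ℝ) 1) ρ) :
    (∃ h : ℕ → ℝ,
      (∀ i < d, ρ + h i = h (i + 1)) ∧
      IsGreatest
        ((fun a : ℝ => binEnt (a * p + (1 - a) * (1 - p)) - binEnt p
            + (1 - a) * h d + a * h 0) '' Set.Icc (0 : ℝ) 1)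
        (ρ + h d)) ∧
    IsGreatest
      ((fun a : ℝ => binEnt (a * p + (1 - a) * (1 - p)) - binEnt p - (a * d + 1) * ρ) ''
        Set.Icc (0 : ℝ) 1) 0 := by
  have hzero := isGreatest_image_sub_mul_of_isGreatest_image_div
    (fun a ha => by have := ha.1; positivity) hρ
  -- the bias `h i = i ρ`: the Bellman right-hand side is then `hzero`'s objective shifted by `ρ + d ρ`
  refine ⟨⟨fun i => i * ρ, fun i _ => by push_cast; ring, ?_⟩, hzero⟩
  convert hzero.image_add_const (ρ + d * ρ) using 1
  · congr 1
    ext a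
    simp only [Nat.cast_zero]
    ring
  · ring

/-- **Solution of the Bellman equation for the (d,∞)-RLL input-constrained BSC**
(core of Theorem 6 of the paper). With
`ρ_p = max_{a ∈ [0,1]} (h_b(ap + (1−a)(1−p)) − h_b(p)) / (ad + 1)`, there is a
function `h : {0,…,d} → ℝ` with `ρ_p + h(i) = h(i+1)` for `0 ≤ i ≤ d−1` and
`ρ_p + h(d) = max_{a ∈ [0,1]} [h_b(ap + (1−a)(1−p)) − h_b(p) + (1−a)h(d) + a·h(0)]`;
in particular `max_{a ∈ [0,1]} [h_b(ap + (1−a)(1−p)) − h_b(p) − (ad+1)ρ_p] = 0`. -/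
theorem bellman_dinfty_BSC (d : ℕ) (hd : 1 ≤ d) (p : ℝ) (hp : p ∈ Set.Icc (0 : ℝ) 1)
    (ρ : ℝ)
    (hρ : IsGreatest
      ((fun a : ℝ => (binEnt (a * p + (1 - a) * (1 - p)) - binEnt p) / (a * d + 1)) ''
        Set.Icc (0 : ℝ) 1) ρ) :
    (∃ h : ℕ → ℝ,
      (∀ i < d, ρ + h i = h (i + 1)) ∧
      IsGreatest
        ((fun a : ℝ => binEnt (a * p + (1 - a) * (1 - p)) - binEnt p
            + (1 - a) * h d + a * h 0) '' Set.Icc (0 : ℝ) 1)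
        (ρ + h d)) ∧
    IsGreatest
      ((fun a : ℝ => binEnt (a * p + (1 - a) * (1 - p)) - binEnt p - (a * d + 1) * ρ) ''
        Set.Icc (0 : ℝ) 1) 0 :=
  bellman_dinfty_BSC_general d p ρ hρ
end

section
/- Solution of the Bellman equation for the (d,k)-runlength-limited input-constrained BSC (core of Theorem 7): Fix integers 0 ≤ d < k < ∞ and p ∈ [0,1], and define ρ_p := max over (a_d, …, a_{k−1}) ∈ [0,1]^{k−d} of [ Σ_{i=d}^{k−1} ( h_b(a_i·p + (1−a_i)·(1−p)) − h_b(p) ) · Π_{j=d}^{i−1} (1−a_j) ] / [ d + 1 + Σ_{i=d}^{k−1} Π_{j=d}^{i} (1−a_j) ], where an empty product equals 1. Then there exists a function h : {0, 1, …, k} → ℝ such that (i) ρ_p + h(i) = h(i+1) for all 0 ≤ i ≤ d−1, (ii) ρ_p + h(i) = max_{a ∈ [0,1]} [ h_b(a·p + (1−a)·(1−p)) − h_b(p) + (1−a)·h(i+1) + a·h(0) ] for all d ≤ i ≤ k−1, and (iii) ρ_p = h(0) − h(k). -/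
open Finset

lemma binEnt_continuous : Continuous binEnt := by
  have h1 : Continuous fun x : ℝ => x * Real.logb 2 x := by
    have : (fun x : ℝ => x * Real.logb 2 x) = fun x : ℝ => (x * Real.log x) / Real.log 2 := by
      funext x; rw [Real.logb]; ring
    rw [this]
    exact Real.continuous_mul_log.div_const _
  have h2 : Continuous fun x : ℝ => (1 - x) * Real.logb 2 (1 - x) :=
    h1.comp (continuous_const.sub continuous_id)
  exact h1.neg.sub h2

lemma aux_exists_max (p x : ℝ) :
    ∃ m, IsGreatest ((fun a : ℝ => binEnt (a * p + (1 - a) * (1 - p)) - binEnt p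
      + (1 - a) * x) '' Set.Icc (0 : ℝ) 1) m := by
  have hc : Continuous fun a : ℝ => binEnt (a * p + (1 - a) * (1 - p)) - binEnt p
      + (1 - a) * x := by
    apply Continuous.add
    · exact (binEnt_continuous.comp (by continuity)).sub continuous_const
    · exact (continuous_const.sub continuous_id).mul continuous_const
  exact ((isCompact_Icc.image hc).exists_isGreatest
    ((Set.nonempty_Icc.mpr zero_le_one).image _))

/-- **Solution of the Bellman equation for the (d,k)-RLL input-constrained BSC**
(core of Theorem 7 of the paper). With
`ρ_p = max_{a_d,…,a_{k−1} ∈ [0,1]} [Σ_{i=d}^{k−1} (h_b(a_i p + (1−a_i)(1−p)) − h_b(p)) Π_{j=d}^{i−1}(1−a_j)]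
        / [d + 1 + Σ_{i=d}^{k−1} Π_{j=d}^{i}(1−a_j)]`,
there is a function `h : {0,…,k} → ℝ` with `ρ_p + h(i) = h(i+1)` for `0 ≤ i ≤ d−1`,
`ρ_p + h(i) = max_{a ∈ [0,1]} [h_b(ap + (1−a)(1−p)) − h_b(p) + (1−a)h(i+1) + a·h(0)]`
for `d ≤ i ≤ k−1`, and `ρ_p = h(0) − h(k)`. -/
theorem bellman_dk_BSC (d k : ℕ) (hdk : d < k) (p : ℝ) (hp : p ∈ Set.Icc (0 : ℝ) 1)
    (ρ : ℝ)
    (hρ : IsGreatest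
      ((fun a : ℕ → ℝ =>
          (∑ i ∈ Finset.Ico d k,
              (binEnt (a i * p + (1 - a i) * (1 - p)) - binEnt p) *
                ∏ j ∈ Finset.Ico d i, (1 - a j)) /
            ((d : ℝ) + 1 + ∑ i ∈ Finset.Ico d k, ∏ j ∈ Finset.Ico d (i + 1), (1 - a j))) ''
        {a : ℕ → ℝ | ∀ i, a i ∈ Set.Icc (0 : ℝ) 1}) ρ) :
    ∃ h : ℕ → ℝ,
      (∀ i < d, ρ + h i = h (i + 1)) ∧
      (∀ i, d ≤ i → i < k →
        IsGreatest
          ((fun a : ℝ => binEnt (a * p + (1 - a) * (1 - p)) - binEnt p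
              + (1 - a) * h (i + 1) + a * h 0) '' Set.Icc (0 : ℝ) 1)
          (ρ + h i)) ∧
      ρ = h 0 - h k := by
  classical
  -- the one-step Bellman operator T
  choose T hT using aux_exists_max p
  -- argmax selector
  have hex2 : ∀ x : ℝ, ∃ a, a ∈ Set.Icc (0 : ℝ) 1 ∧
      binEnt (a * p + (1 - a) * (1 - p)) - binEnt p + (1 - a) * x = T x := by
    intro x
    obtain ⟨a, ha, hfa⟩ := (hT x).1
    exact ⟨a, ha, hfa⟩
  choose α hα1 hα2 using hex2
  -- backward recursion
  set g : ℕ → ℝ := fun n => Nat.rec (-ρ) (fun _ y => T y - ρ) n with hg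
  have hg0 : g 0 = -ρ := rfl
  have hgs : ∀ m, g (m + 1) = T (g m) - ρ := fun m => rfl
  -- splitting identities
  have hsplitN : ∀ (a : ℕ → ℝ) (i : ℕ), i < k →
      (∑ l ∈ Ico i k, (binEnt (a l * p + (1 - a l) * (1 - p)) - binEnt p) *
          ∏ j ∈ Ico i l, (1 - a j))
      = (binEnt (a i * p + (1 - a i) * (1 - p)) - binEnt p)
        + (1 - a i) * ∑ l ∈ Ico (i + 1) k,
            (binEnt (a l * p + (1 - a l) * (1 - p)) - binEnt p) *
              ∏ j ∈ Ico (i + 1) l, (1 - a j) := by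
    intro a i hik
    rw [Finset.sum_eq_sum_Ico_succ_bot hik, Finset.mul_sum]
    simp only [Finset.Ico_self, Finset.prod_empty, mul_one]
    congr 1
    apply Finset.sum_congr rfl
    intro l hl
    have hil : i < l := (Finset.mem_Ico.mp hl).1
    rw [Finset.prod_eq_prod_Ico_succ_bot hil]
    ring
  have hsplitD : ∀ (a : ℕ → ℝ) (i : ℕ), i < k →
      (∑ l ∈ Ico i k, ∏ j ∈ Ico i (l + 1), (1 - a j))
      = (1 - a i) * (1 + ∑ l ∈ Ico (i + 1) k, ∏ j ∈ Ico (i + 1) (l + 1), (1 - a j)) := by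
    intro a i hik
    rw [Finset.sum_eq_sum_Ico_succ_bot hik]
    have h1 : (∏ j ∈ Ico i (i + 1), (1 - a j)) = 1 - a i := by
      simp [Nat.Ico_succ_singleton]
    rw [h1, mul_add, mul_one, Finset.mul_sum]
    congr 1
    apply Finset.sum_congr rfl
    intro l hl
    have hil : i < l + 1 := by
      have := (Finset.mem_Ico.mp hl).1; omega
    rw [Finset.prod_eq_prod_Ico_succ_bot hil]
  -- Lemma A : lower bound on g (k - i) from any admissible sequence
  have lemA : ∀ (a : ℕ → ℝ), (∀ j, a j ∈ Set.Icc (0 : ℝ) 1) → ∀ m i, i + m = k →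
      (∑ l ∈ Ico i k, (binEnt (a l * p + (1 - a l) * (1 - p)) - binEnt p) *
          ∏ j ∈ Ico i l, (1 - a j))
        - ρ * (1 + ∑ l ∈ Ico i k, ∏ j ∈ Ico i (l + 1), (1 - a j)) ≤ g m := by
    intro a ha
    intro m
    induction m with
    | zero =>
      intro i hik
      have : i = k := by omega
      subst this
      simp [hg0, Finset.Ico_self]
    | succ m ih =>
      intro i hik
      have hik' : (i + 1) + m = k := by omega
      have hilt : i < k := by omega
      have h1 := ih (i + 1) hik'
      have h2 : binEnt (a i * p + (1 - a i) * (1 - p)) - binEnt p + (1 - a i) * g m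
          ≤ T (g m) := (hT (g m)).2 ⟨a i, ha i, rfl⟩
      have h3 : (0 : ℝ) ≤ 1 - a i := by have := (ha i).2; linarith
      have h4 := mul_le_mul_of_nonneg_left h1 h3
      rw [hsplitN a i hilt, hsplitD a i hilt, hgs m]
      nlinarith [h4, h2]
  -- Lemma B : the greedy sequence achieves g exactly
  set ah : ℕ → ℝ := fun j => if j < k then α (g (k - j - 1)) else 0 with hah
  have hahmem : ∀ j, ah j ∈ Set.Icc (0 : ℝ) 1 := by
    intro j
    by_cases hj : j < k
    · simp only [hah, if_pos hj]; exact hα1 _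
    · simp only [hah, if_neg hj]; exact ⟨le_refl 0, zero_le_one⟩
  have lemB : ∀ m i, i + m = k →
      (∑ l ∈ Ico i k, (binEnt (ah l * p + (1 - ah l) * (1 - p)) - binEnt p) *
          ∏ j ∈ Ico i l, (1 - ah j))
        - ρ * (1 + ∑ l ∈ Ico i k, ∏ j ∈ Ico i (l + 1), (1 - ah j)) = g m := by
    intro m
    induction m with
    | zero =>
      intro i hik
      have : i = k := by omega
      subst this
      simp [hg0, Finset.Ico_self]
    | succ m ih =>
      intro i hik
      have hik' : (i + 1) + m = k := by omega
      have hilt : i < k := by omega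
      have h1 := ih (i + 1) hik'
      have hai : ah i = α (g m) := by
        have : k - i - 1 = m := by omega
        simp only [hah, if_pos hilt, this]
      have h2 : binEnt (ah i * p + (1 - ah i) * (1 - p)) - binEnt p + (1 - ah i) * g m
          = T (g m) := by rw [hai]; exact hα2 (g m)
      rw [hsplitN ah i hilt, hsplitD ah i hilt, hgs m, ← h2]
      linear_combination (1 - ah i) * h1
  -- extract the maximizer of ρ
  obtain ⟨as, has, hval⟩ := hρ.1
  have hDpos : ∀ a : ℕ → ℝ, (∀ j, a j ∈ Set.Icc (0 : ℝ) 1) →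
      (0 : ℝ) < (d : ℝ) + 1 + ∑ i ∈ Ico d k, ∏ j ∈ Ico d (i + 1), (1 - a j) := by
    intro a ha
    have hs : (0 : ℝ) ≤ ∑ i ∈ Ico d k, ∏ j ∈ Ico d (i + 1), (1 - a j) := by
      apply Finset.sum_nonneg
      intro i _
      apply Finset.prod_nonneg
      intro j _
      have := (ha j).2; linarith
    positivity
  have hNle : ∀ a : ℕ → ℝ, (∀ j, a j ∈ Set.Icc (0 : ℝ) 1) →
      (∑ i ∈ Ico d k, (binEnt (a i * p + (1 - a i) * (1 - p)) - binEnt p) *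
          ∏ j ∈ Ico d i, (1 - a j))
        ≤ ρ * ((d : ℝ) + 1 + ∑ i ∈ Ico d k, ∏ j ∈ Ico d (i + 1), (1 - a j)) := by
    intro a ha
    have hle := hρ.2 ⟨a, ha, rfl⟩
    have := hDpos a ha
    rw [div_le_iff₀ this] at hle
    linarith [hle]
  have hNeq : (∑ i ∈ Ico d k, (binEnt (as i * p + (1 - as i) * (1 - p)) - binEnt p) *
          ∏ j ∈ Ico d i, (1 - as j))
        = ρ * ((d : ℝ) + 1 + ∑ i ∈ Ico d k, ∏ j ∈ Ico d (i + 1), (1 - as j)) := by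
    have := hDpos as has
    field_simp at hval
    linarith [hval]
  -- key : g (k - d) = d * ρ
  have hkd : d + (k - d) = k := by omega
  have hkey : g (k - d) = (d : ℝ) * ρ := by
    have hub : g (k - d) ≤ (d : ℝ) * ρ := by
      have hB := lemB (k - d) d hkd
      have hN := hNle ah hahmem
      nlinarith [hB, hN]
    have hlb : (d : ℝ) * ρ ≤ g (k - d) := by
      have hA := lemA as has (k - d) d hkd
      nlinarith [hA, hNeq]
    linarith
  -- the solution of the Bellman equation
  refine ⟨fun i => if i ≤ d then (i : ℝ) * ρ else g (k - i), ?_, ?_, ?_⟩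
  · intro i hi
    have h1 : i ≤ d := by omega
    have h2 : i + 1 ≤ d := by omega
    simp only [if_pos h1, if_pos h2]
    push_cast
    ring
  · intro i hdi hik
    have hii : (if i ≤ d then (i : ℝ) * ρ else g (k - i)) = g (k - i) := by
      by_cases h : i ≤ d
      · have : i = d := le_antisymm h hdi
        subst this
        rw [if_pos h, hkey]
      · rw [if_neg h]
    have hisucc : ¬ (i + 1 ≤ d) := by omega
    have h0d : (0 : ℕ) ≤ d := Nat.zero_le d
    have hh0 : (if (0 : ℕ) ≤ d then ((0 : ℕ) : ℝ) * ρ else g (k - 0)) = 0 := by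
      simp
    beta_reduce
    rw [hii, hh0, if_neg hisucc]
    have hksub : k - i = (k - (i + 1)) + 1 := by omega
    have hgeq : ρ + g (k - i) = T (g (k - (i + 1))) := by
      rw [hksub, hgs]; ring
    rw [hgeq]
    have hfun : (fun a : ℝ => binEnt (a * p + (1 - a) * (1 - p)) - binEnt p
          + (1 - a) * g (k - (i + 1)) + a * 0)
        = fun a : ℝ => binEnt (a * p + (1 - a) * (1 - p)) - binEnt p
          + (1 - a) * g (k - (i + 1)) := by
      funext a; ring
    rw [hfun]
    exact hT (g (k - (i + 1)))
  · have h0 : (0 : ℕ) ≤ d := Nat.zero_le d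
    have hk : ¬ (k ≤ d) := by omega
    simp only [if_pos h0, if_neg hk, Nat.cast_zero, zero_mul, Nat.sub_self, hg0]
    ring
end

section
/- Solution of the Bellman equation for the (d,∞)-runlength-limited input-constrained BEC (core of Theorem 8): Fix an integer d ≥ 1 and ε ∈ [0,1], and define ρ_ε := (1−ε) · max_{a ∈ [0,1]} h_b(a) / (a·d + 1). Then there exists a function h : {0, 1, …, d} → ℝ such that (i) ρ_ε + h(i) = h(i+1) for all 0 ≤ i ≤ d−1, and (ii) ρ_ε + h(d) = max_{a ∈ [0,1]} [ (1−ε)·h_b(a) + (1−a)·h(d) + a·h(0) ]. In particular, max_{a ∈ [0,1]} [ (1−ε)·h_b(a) − (a·d + 1)·ρ_ε ] = 0. -/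
open Finset

/-!
The Bellman equation is solved by the linear relative value function `h i = i ρ`: then (i)
holds trivially, and the objective in (ii) equals `(1 - ε) h_b(a) - (a d + 1) ρ + (d + 1) ρ`.
Since `ρ = (1 - ε) m` with `m` the maximum of `h_b(a) / (a d + 1)`, clearing the positive
denominator shows that `(1 - ε) h_b(a) - (a d + 1) ρ` is nonpositive on `[0, 1]` and vanishes at a maximiser,
which gives both the final claim and, after the shift by `(d + 1) ρ`, equation (ii).
-/

lemma isGreatest_image_add_const {α : Type*} {s : Set α} {f : α → ℝ} {M : ℝ} (c : ℝ)
    (h : IsGreatest (f '' s) M) : IsGreatest ((fun a => f a + c) '' s) (M + c) := by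
  simpa only [Set.image_image] using (add_left_mono (a := c)).map_isGreatest h

lemma isGreatest_image_mul_sub_of_isGreatest_image_div {α : Type*} {s : Set α} {f g : α → ℝ}
    {m c : ℝ} (hg : ∀ a ∈ s, 0 < g a) (hc : 0 ≤ c)
    (hm : IsGreatest ((fun a => f a / g a) '' s) m) :
    IsGreatest ((fun a => c * f a - g a * (c * m)) '' s) 0 := by
  obtain ⟨⟨a₀, ha₀, rfl⟩, hub⟩ := hm
  refine ⟨⟨a₀, ha₀, by field_simp [(hg a₀ ha₀).ne']; ring⟩, ?_⟩
  rintro _ ⟨a, ha, rfl⟩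
  have hfg : f a ≤ f a₀ / g a₀ * g a := (div_le_iff₀ (hg a ha)).1 (hub ⟨a, ha, rfl⟩)
  show c * f a - g a * (c * (f a₀ / g a₀)) ≤ 0
  linarith [mul_le_mul_of_nonneg_left hfg hc]

theorem bellman_dinfty_BEC_general (d : ℕ) (ε : ℝ) (hε : ε ∈ Set.Icc (0 : ℝ) 1)
    (m ρ : ℝ)
    (hm : IsGreatest ((fun a : ℝ => binEnt a / (a * d + 1)) '' Set.Icc (0 : ℝ) 1) m)
    (hρ : ρ = (1 - ε) * m) :
    (∃ h : ℕ → ℝ,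
      (∀ i < d, ρ + h i = h (i + 1)) ∧
      IsGreatest
        ((fun a : ℝ => (1 - ε) * binEnt a + (1 - a) * h d + a * h 0) '' Set.Icc (0 : ℝ) 1)
        (ρ + h d)) ∧
    IsGreatest
      ((fun a : ℝ => (1 - ε) * binEnt a - (a * d + 1) * ρ) '' Set.Icc (0 : ℝ) 1) 0 := by
  have hden : ∀ a ∈ Set.Icc (0 : ℝ) 1, 0 < a * d + 1 := fun a ha =>
    add_pos_of_nonneg_of_pos (mul_nonneg ha.1 d.cast_nonneg) one_pos
  have hgap := isGreatest_image_mul_sub_of_isGreatest_image_div hden (sub_nonneg.2 hε.2) hm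
  rw [← hρ] at hgap
  refine ⟨⟨fun i => i * ρ, fun i _ => by push_cast; ring, ?_⟩, hgap⟩
  convert isGreatest_image_add_const (ρ + d * ρ) hgap using 1
  · congr 1
    ext a
    simp only [Nat.cast_zero]
    ring
  · ring

/-- **Solution of the Bellman equation for the (d,∞)-RLL input-constrained BEC**
(core of Theorem 8 of the paper). With
`ρ_ε = (1−ε) · max_{a ∈ [0,1]} h_b(a) / (ad + 1)`, there is a function
`h : {0,…,d} → ℝ` with `ρ_ε + h(i) = h(i+1)` for `0 ≤ i ≤ d−1` and
`ρ_ε + h(d) = max_{a ∈ [0,1]} [(1−ε)h_b(a) + (1−a)h(d) + a·h(0)]`;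
in particular `max_{a ∈ [0,1]} [(1−ε)h_b(a) − (ad+1)ρ_ε] = 0`. -/
theorem bellman_dinfty_BEC (d : ℕ) (hd : 1 ≤ d) (ε : ℝ) (hε : ε ∈ Set.Icc (0 : ℝ) 1)
    (m ρ : ℝ)
    (hm : IsGreatest ((fun a : ℝ => binEnt a / (a * d + 1)) '' Set.Icc (0 : ℝ) 1) m)
    (hρ : ρ = (1 - ε) * m) :
    (∃ h : ℕ → ℝ,
      (∀ i < d, ρ + h i = h (i + 1)) ∧
      IsGreatest
        ((fun a : ℝ => (1 - ε) * binEnt a + (1 - a) * h d + a * h 0) '' Set.Icc (0 : ℝ) 1)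
        (ρ + h d)) ∧
    IsGreatest
      ((fun a : ℝ => (1 - ε) * binEnt a - (a * d + 1) * ρ) '' Set.Icc (0 : ℝ) 1) 0 :=
  bellman_dinfty_BEC_general d ε hε m ρ hm hρ
end
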